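/- arXiv:2012.02419 — 3 statements merged into one kernel-verified Lean document; each statement's English description precedes it below -/
import Mathlib

section
/- In a one-step MDP with goal interference, the GCSL iteration fails to preserve optimality: if π_{t-1} is an optimal goal-conditioned policy and there exist goals g, g' with p(g') > 0 and p(s=g | a_*(g)) > p(s=g | a_*(g')) > 0, then the distilled policy π_t(a|g) ∝ p(s=g|a)·Σ_{g''} p(g'')π_{t-1}(a|g'') assigns positive probability to the suboptimal action a_*(g'), i.e., π_t(a_*(g')|g) / π_t(a_*(g)|g) ≥ p(s=g|a_*(g'))·p(g') / p(s=g|a_*(g)) > 0. -/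
/-!
The previous policy is deterministic, so the marginal action distribution `m` gives action `a`
the total goal mass of the fibre of `a_*` over `a`: in particular `p g' ≤ m (a_*(g'))` and
`m (a_*(g)) ≤ 1`. The GCSL normaliser is common to both actions and cancels in the ratio,
which is therefore `d g (a_*(g')) m (a_*(g')) / (d g (a_*(g)) m (a_*(g)))`, and the two
bounds on `m` give the claim.
-/

open Finset

section Fibre

variable {ι A : Type*} [Fintype ι] [DecidableEq A] {p : ι → ℝ}

theorem sum_mul_ite_eq_sum_fibre (f : ι → A) (a : A) :
    ∑ i, p i * (if a = f i then 1 else 0) = ∑ i with f i = a, p i := by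
  simp only [mul_ite, mul_one, mul_zero, sum_filter, eq_comm]

theorem le_sum_fibre (hp0 : ∀ i, 0 ≤ p i) (f : ι → A) (i : ι) :
    p i ≤ ∑ j with f j = f i, p j :=
  single_le_sum (fun j _ => hp0 j) (mem_filter.2 ⟨mem_univ i, rfl⟩)

theorem sum_fibre_le_one (hp0 : ∀ i, 0 ≤ p i) (hp1 : ∑ i, p i = 1) (f : ι → A) (a : A) :
    ∑ i with f i = a, p i ≤ 1 :=
  hp1 ▸ sum_le_univ_sum_of_nonneg hp0

end Fibre

theorem stmt_3_general (A Goal : Type*) [Fintype A] [Fintype Goal] [DecidableEq A]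
    (p : Goal → ℝ) (hp0 : ∀ g, 0 ≤ p g) (hp1 : ∑ g, p g = 1)
    (d : Goal → A → ℝ) (hd0 : ∀ g a, 0 ≤ d g a)
    (astar : Goal → A)
    -- the optimal deterministic previous policy
    (πprev : A → Goal → ℝ) (hπprev : ∀ a g, πprev a g = if a = astar g then 1 else 0)
    -- marginal action distribution and GCSL update
    (m : A → ℝ) (hm : ∀ a, m a = ∑ g'', p g'' * πprev a g'')
    (πt : A → Goal → ℝ)
    (hπt : ∀ a g, πt a g = d g a * m a / ∑ a', d g a' * m a')
    -- goal interference
    (g g' : Goal) (hpg : 0 < p g) (hpg' : 0 < p g')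
    (hinter1 : d g (astar g') < d g (astar g)) (hinter2 : 0 < d g (astar g')) :
    d g (astar g') * p g' / d g (astar g) ≤ πt (astar g') g / πt (astar g) g ∧
      0 < d g (astar g') * p g' / d g (astar g) := by
  have hm_fibre (a : A) : m a = ∑ h with astar h = a, p h := by
    simp only [hm, hπprev, sum_mul_ite_eq_sum_fibre]
  have hm_ge (h : Goal) : p h ≤ m (astar h) := hm_fibre _ ▸ le_sum_fibre hp0 astar h
  have hm_le_one (a : A) : m a ≤ 1 := hm_fibre a ▸ sum_fibre_le_one hp0 hp1 astar a
  have hm_nonneg (a : A) : 0 ≤ m a := hm_fibre a ▸ sum_nonneg fun h _ => hp0 h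
  have hdg : 0 < d g (astar g) := hinter2.trans hinter1
  have hmg : 0 < m (astar g) := hpg.trans_le (hm_ge g)
  have hnormaliser : 0 < ∑ a', d g a' * m a' :=
    sum_pos' (fun a _ => mul_nonneg (hd0 g a) (hm_nonneg a))
      ⟨astar g', mem_univ _, mul_pos hinter2 (hpg'.trans_le (hm_ge g'))⟩
  refine ⟨?_, by positivity⟩
  rw [hπt, hπt, div_div_div_cancel_right₀ hnormaliser.ne']
  calc d g (astar g') * p g' / d g (astar g)
      ≤ d g (astar g') * m (astar g') / d g (astar g) := by gcongr; exact hm_ge g'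
    _ ≤ d g (astar g') * m (astar g') / (d g (astar g) * m (astar g)) := by
        gcongr
        · exact mul_nonneg (hd0 _ _) (hm_nonneg _)
        · exact mul_le_of_le_one_right hdg.le (hm_le_one _)

/-- GCSL fails to preserve optimality under goal interference: starting from the
optimal deterministic policy `πprev`, the GCSL-updated policy `πt` satisfies
`πt(a_*(g')|g) / πt(a_*(g)|g) ≥ p(s=g|a_*(g'))·p(g') / p(s=g|a_*(g)) > 0`. -/
theorem stmt_3 (A Goal : Type*) [Fintype A] [Fintype Goal] [DecidableEq A]
    (p : Goal → ℝ) (hp0 : ∀ g, 0 ≤ p g) (hp1 : ∑ g, p g = 1)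
    (d : Goal → A → ℝ) (hd0 : ∀ g a, 0 ≤ d g a)
    (astar : Goal → A) (hastar : ∀ g a, d g a ≤ d g (astar g))
    -- the optimal deterministic previous policy
    (πprev : A → Goal → ℝ) (hπprev : ∀ a g, πprev a g = if a = astar g then 1 else 0)
    -- marginal action distribution and GCSL update
    (m : A → ℝ) (hm : ∀ a, m a = ∑ g'', p g'' * πprev a g'')
    (πt : A → Goal → ℝ)
    (hπt : ∀ a g, πt a g = d g a * m a / ∑ a', d g a' * m a')
    -- goal interference
    (g g' : Goal) (hgg' : g ≠ g') (hpg : 0 < p g) (hpg' : 0 < p g')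
    (hinter1 : d g (astar g') < d g (astar g)) (hinter2 : 0 < d g (astar g'))
    (hane : astar g ≠ astar g') :
    d g (astar g') * p g' / d g (astar g) ≤ πt (astar g') g / πt (astar g) g ∧
      0 < d g (astar g') * p g' / d g (astar g) :=
  stmt_3_general A Goal p hp0 hp1 d hd0 astar πprev hπprev m hm πt hπt g g' hpg hpg' hinter1 hinter2
end

section
/- If the one-step GCSL fixed point condition holds — i.e., π(a|g) = p(s=g|a)·m(a) / Σ_{a'} p(s=g|a')·m(a') with m(a) = Σ_{g'} p(g')·π(a|g') — and there is goal interference (goals g, g' with p(g') > 0, p(s=g|a_*(g)) > p(s=g|a_*(g')) > 0, where m(a_*(g')) > 0), then π is not optimal for goal g: π(a_*(g)|g) < 1. -/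
/-- A one-step GCSL fixed point is suboptimal under goal interference:
if `π` satisfies the fixed-point equation and goals `g, g'` interfere, then
`π(a_*(g)|g) < 1`. -/
theorem stmt_7 (A Goal : Type*) [Fintype A] [Fintype Goal]
    (p : Goal → ℝ) (hp0 : ∀ g, 0 ≤ p g) (hp1 : ∑ g, p g = 1)
    (d : Goal → A → ℝ) (hd0 : ∀ g a, 0 ≤ d g a)
    (astar : Goal → A) (hastar : ∀ g a, d g a ≤ d g (astar g))
    (π : A → Goal → ℝ) (hπ0 : ∀ a g, 0 ≤ π a g) (hπ1 : ∀ g, ∑ a, π a g = 1)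
    (m : A → ℝ) (hm : ∀ a, m a = ∑ g'', p g'' * π a g'')
    -- the GCSL fixed-point condition
    (hfix : ∀ a g, π a g = d g a * m a / ∑ a', d g a' * m a')
    -- goal interference
    (g g' : Goal) (hpg' : 0 < p g')
    (hinter1 : d g (astar g') < d g (astar g)) (hinter2 : 0 < d g (astar g'))
    (hm' : 0 < m (astar g')) :
    π (astar g) g < 1 := by
  have hmnn : ∀ a, 0 ≤ m a := by
    intro a
    rw [hm a]
    exact Finset.sum_nonneg fun g'' _ => mul_nonneg (hp0 g'') (hπ0 a g'')
  have hne : astar g ≠ astar g' := by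
    intro h
    rw [h] at hinter1
    exact lt_irrefl _ hinter1
  have hZpos : 0 < ∑ a', d g a' * m a' := by
    apply Finset.sum_pos' (fun a _ => mul_nonneg (hd0 g a) (hmnn a))
    exact ⟨astar g', Finset.mem_univ _, mul_pos hinter2 hm'⟩
  have hpos : 0 < π (astar g') g := by
    rw [hfix]
    exact div_pos (mul_pos hinter2 hm') hZpos
  have hsum : π (astar g) g + π (astar g') g ≤ 1 := by
    rw [← hπ1 g]
    classical
    rw [← Finset.sum_pair (f := fun a => π a g) hne]
    exact Finset.sum_le_sum_of_subset_of_nonneg (Finset.subset_univ _)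
      (fun a _ _ => hπ0 a g)
  linarith
end

section
/- Strict suboptimality persists under GCSL: under goal interference with π_{t-1} optimal, the updated policy π_t satisfies π_t(a_*(g)|g) ≤ p(s=g|a_*(g))·m(a_*(g)) / (p(s=g|a_*(g))·m(a_*(g)) + p(s=g|a_*(g'))·m(a_*(g'))) < 1, where m is the marginal action distribution under π_{t-1}. -/
/-- Strict suboptimality persists under GCSL: with goal interference and an optimal
deterministic previous policy, the updated policy satisfies
`πt(a_*(g)|g) ≤ d·m / (d·m + d'·m') < 1`. -/
theorem stmt_19 (A Goal : Type*) [Fintype A] [Fintype Goal] [DecidableEq A]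
    (p : Goal → ℝ) (hp0 : ∀ g, 0 ≤ p g) (hp1 : ∑ g, p g = 1)
    (d : Goal → A → ℝ) (hd0 : ∀ g a, 0 ≤ d g a)
    (astar : Goal → A)
    (πprev : A → Goal → ℝ) (hπprev : ∀ a g, πprev a g = if a = astar g then 1 else 0)
    (m : A → ℝ) (hm : ∀ a, m a = ∑ g'', p g'' * πprev a g'')
    (πt : A → Goal → ℝ)
    (hπt : ∀ a g, πt a g = d g a * m a / ∑ a', d g a' * m a')
    (g g' : Goal) (hane : astar g ≠ astar g')
    (hpg' : 0 < p g') (hdg' : 0 < d g (astar g')) (hdg : 0 < d g (astar g)) :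
    πt (astar g) g ≤
        d g (astar g) * m (astar g) /
          (d g (astar g) * m (astar g) + d g (astar g') * m (astar g')) ∧
      d g (astar g) * m (astar g) /
          (d g (astar g) * m (astar g) + d g (astar g') * m (astar g')) < 1 := by
  have hm0 : ∀ a, 0 ≤ m a := by
    intro a
    rw [hm]
    apply Finset.sum_nonneg
    intro i _
    rw [hπprev]
    by_cases h : a = astar i <;> simp [h, hp0 i]
  have hmg' : p g' ≤ m (astar g') := by
    rw [hm]
    calc p g' = p g' * πprev (astar g') g' := by rw [hπprev]; simp
    _ ≤ ∑ g'', p g'' * πprev (astar g') g'' := by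
        apply Finset.single_le_sum (f := fun g'' => p g'' * πprev (astar g') g'')
          (fun i _ => ?_) (Finset.mem_univ g')
        simp only [hπprev]
        by_cases h : astar g' = astar i <;> simp [h, hp0 i]
  have hN : 0 ≤ d g (astar g) * m (astar g) := mul_nonneg (hd0 _ _) (hm0 _)
  have hP : 0 < d g (astar g') * m (astar g') :=
    mul_pos hdg' (lt_of_lt_of_le hpg' hmg')
  have hD : 0 < d g (astar g) * m (astar g) + d g (astar g') * m (astar g') := by linarith
  have hDS : d g (astar g) * m (astar g) + d g (astar g') * m (astar g') ≤
      ∑ a', d g a' * m a' := by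
    have := Finset.sum_le_sum_of_subset_of_nonneg
      (s := ({astar g, astar g'} : Finset A)) (t := Finset.univ)
      (f := fun a' => d g a' * m a')
      (Finset.subset_univ _) (fun i _ _ => mul_nonneg (hd0 _ _) (hm0 _))
    rwa [Finset.sum_pair hane] at this
  constructor
  · rw [hπt]
    exact div_le_div_of_nonneg_left hN hD hDS
  · rw [div_lt_one hD]
    linarith
end
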